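/- If (A,B,C) is a balanced set of n-sided dice, then each face-sum equals 3n(3n+1)/6 = n(3n+1)/2; that is, Σ_{i∈A} i = Σ_{i∈B} i = Σ_{i∈C} i = n(3n+1)/2. -/
import Mathlib

open Finset

/-- Number of winning pairs: pairs (x,y) with x from X, y from Y, and x > y. -/
def W (X Y : Finset ℕ) : ℕ := ((X ×ˢ Y).filter (fun p => p.2 < p.1)).card

/-- A set of n-sided dice: a partition of [3n] into three n-element sets. -/
def IsDice (n : ℕ) (A B C : Finset ℕ) : Prop :=
  A ∪ B ∪ C = Finset.Icc 1 (3 * n) ∧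
  A.card = n ∧ B.card = n ∧ C.card = n ∧
  Disjoint A B ∧ Disjoint A C ∧ Disjoint B C

lemma W_eq_sum (X Y : Finset ℕ) :
    W X Y = ∑ x ∈ X, ∑ y ∈ Y, if y < x then 1 else 0 := by
  rw [W, Finset.card_filter, Finset.sum_product]

lemma W_swap (X Y : Finset ℕ) :
    W Y X = ∑ x ∈ X, ∑ y ∈ Y, if x < y then 1 else 0 := by
  rw [W_eq_sum]; exact Finset.sum_comm

lemma W_add_W (X Y : Finset ℕ) (hd : Disjoint X Y) :
    W X Y + W Y X = X.card * Y.card := by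
  rw [W_eq_sum, W_swap, ← Finset.sum_add_distrib]
  have h : ∀ x ∈ X, ((∑ y ∈ Y, if y < x then 1 else 0) + ∑ y ∈ Y, if x < y then 1 else 0)
      = Y.card := by
    intro x hx
    rw [← Finset.sum_add_distrib, Finset.card_eq_sum_ones Y]
    refine Finset.sum_congr rfl fun y hy => ?_
    have : x ≠ y := fun h => Finset.disjoint_left.mp hd hx (h ▸ hy)
    split_ifs <;> omega
  rw [Finset.sum_congr rfl h, Finset.sum_const, smul_eq_mul]

lemma two_W_self (X : Finset ℕ) : 2 * W X X + X.card = X.card * X.card := by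
  have hdiag : ∑ x ∈ X, ∑ y ∈ X, (if x = y then 1 else 0) = X.card := by
    rw [Finset.card_eq_sum_ones X]
    refine Finset.sum_congr rfl fun x hx => ?_
    simp [hx]
  have key : 2 * W X X + X.card =
      ∑ x ∈ X, ∑ y ∈ X, ((if y < x then 1 else 0) + (if x < y then 1 else 0)
        + (if x = y then 1 else 0)) := by
    rw [two_mul]
    nth_rewrite 2 [show W X X = ∑ x ∈ X, ∑ y ∈ X, if x < y then 1 else 0 from W_swap X X]
    rw [W_eq_sum, ← hdiag]
    simp [Finset.sum_add_distrib]
  rw [key]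
  have : ∀ x ∈ X, ∑ y ∈ X, ((if y < x then 1 else 0) + (if x < y then 1 else 0)
      + (if x = y then 1 else 0)) = X.card := by
    intro x hx
    rw [Finset.card_eq_sum_ones X]
    refine Finset.sum_congr rfl fun y hy => ?_
    rcases lt_trichotomy x y with h|h|h <;> split_ifs <;> omega
  rw [Finset.sum_congr rfl this, Finset.sum_const, smul_eq_mul]

lemma W_union_right (X Y Z : Finset ℕ) (h : Disjoint Y Z) :
    W X (Y ∪ Z) = W X Y + W X Z := by
  simp [W_eq_sum, Finset.sum_union h, Finset.sum_add_distrib]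

lemma sum_eq_card_add_W (n : ℕ) (A : Finset ℕ) (hsub : A ⊆ Finset.Icc 1 (3 * n)) :
    ∑ i ∈ A, i = A.card + W A (Finset.Icc 1 (3 * n)) := by
  rw [W_eq_sum, Finset.card_eq_sum_ones, ← Finset.sum_add_distrib]
  refine Finset.sum_congr rfl fun a ha => ?_
  have h1 := Finset.mem_Icc.mp (hsub ha)
  have hfil : (Finset.Icc 1 (3 * n)).filter (fun y => y < a) = Finset.Icc 1 (a - 1) := by
    ext y
    simp only [Finset.mem_filter, Finset.mem_Icc]
    omega
  have : ∑ y ∈ Finset.Icc 1 (3 * n), (if y < a then 1 else 0) = a - 1 := by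
    rw [← Finset.card_filter, hfil, Nat.card_Icc]
    omega
  omega

theorem stmt10' (n : ℕ) (A B C : Finset ℕ)
    (hU : A ∪ B ∪ C = Finset.Icc 1 (3 * n))
    (hA : A.card = n) (hB : B.card = n) (hC : C.card = n)
    (hAB : Disjoint A B) (hAC : Disjoint A C) (hBC : Disjoint B C)
    (hbal : W A B = W B C ∧ W B C = W C A) :
    (∑ i ∈ A, i) = n * (3 * n + 1) / 2 ∧
    (∑ i ∈ B, i) = n * (3 * n + 1) / 2 ∧
    (∑ i ∈ C, i) = n * (3 * n + 1) / 2 := by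
  obtain ⟨hb1, hb2⟩ := hbal
  have hdisj : Disjoint (A ∪ B) C := Finset.disjoint_union_left.mpr ⟨hAC, hBC⟩
  have hsubA : A ⊆ Finset.Icc 1 (3 * n) := by
    rw [← hU]; exact (Finset.subset_union_left.trans Finset.subset_union_left)
  have hsubB : B ⊆ Finset.Icc 1 (3 * n) := by
    rw [← hU]; exact (Finset.subset_union_right.trans Finset.subset_union_left)
  have hsubC : C ⊆ Finset.Icc 1 (3 * n) := by
    rw [← hU]; exact Finset.subset_union_right
  have hWA : W A (Finset.Icc 1 (3 * n)) = W A A + W A B + W A C := by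
    rw [← hU, W_union_right _ _ _ hdisj, W_union_right _ _ _ hAB]
  have hWB : W B (Finset.Icc 1 (3 * n)) = W B A + W B B + W B C := by
    rw [← hU, W_union_right _ _ _ hdisj, W_union_right _ _ _ hAB]
  have hWC : W C (Finset.Icc 1 (3 * n)) = W C A + W C B + W C C := by
    rw [← hU, W_union_right _ _ _ hdisj, W_union_right _ _ _ hAB]
  have hsA := sum_eq_card_add_W n A hsubA
  have hsB := sum_eq_card_add_W n B hsubB
  have hsC := sum_eq_card_add_W n C hsubC
  have h2A := two_W_self A
  have h2B := two_W_self B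
  have h2C := two_W_self C
  have hab := W_add_W A B hAB
  have hac := W_add_W A C hAC
  have hbc := W_add_W B C hBC
  have hba : W B A + W A B = B.card * A.card := by
    rw [add_comm, hab, hA, hB]
  have hca : W C A + W A C = C.card * A.card := by
    rw [add_comm, hac, hA, hC]
  have hcb : W C B + W B C = C.card * B.card := by
    rw [add_comm, hbc, hB, hC]
  have hm : n * (3 * n + 1) = 3 * (n * n) + n := by ring
  rw [hA] at h2A hsA; rw [hB] at h2B hsB; rw [hC] at h2C hsC
  rw [hA, hB] at hab hba; rw [hA, hC] at hac hca; rw [hB, hC] at hbc hcb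
  rw [hWA] at hsA; rw [hWB] at hsB; rw [hWC] at hsC
  rw [hm]
  set sA := ∑ i ∈ A, i with hd1
  set sB := ∑ i ∈ B, i with hd2
  set sC := ∑ i ∈ C, i with hd3
  set m := n * n with hd4
  set waa := W A A with hd5
  set wbb := W B B with hd6
  set wcc := W C C with hd7
  set wab := W A B with hd8
  set wba := W B A with hd9
  set wac := W A C with hd10
  set wca := W C A with hd11
  set wbc := W B C with hd12
  set wcb := W C B with hd13
  clear_value sA sB sC m waa wbb wcc wab wba wac wca wbc wcb
  clear hd1 hd2 hd3 hd4 hd5 hd6 hd7 hd8 hd9 hd10 hd11 hd12 hd13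
  clear hU hdisj hsubA hsubB hsubC hAB hAC hBC hA hB hC hWA hWB hWC hm A B C
  refine ⟨?_, ?_, ?_⟩ <;> omega

theorem stmt10 (n : ℕ) (A B C : Finset ℕ) (h : IsDice n A B C)
    (hbal : W A B = W B C ∧ W B C = W C A) :
    (∑ i ∈ A, i) = n * (3 * n + 1) / 2 ∧
    (∑ i ∈ B, i) = n * (3 * n + 1) / 2 ∧
    (∑ i ∈ C, i) = n * (3 * n + 1) / 2 := by
  obtain ⟨hU, hA, hB, hC, hAB, hAC, hBC⟩ := h
  exact stmt10' n A B C hU hA hB hC hAB hAC hBC hbal
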